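/- arXiv:1001.3249 — 2 statements merged into one kernel-verified Lean document; each statement's English description precedes it below -/
import Mathlib

section
/- (Corollary 2.4) Assume the Riemann–Roch hypothesis with g ≥ 2, and suppose there exists a divisor H with deg H = 2 and rk|H| = 1 (a g¹₂, i.e. Γ is hyperelliptic). Then (g − 1)·H is linearly equivalent to K; that is, |K| = (g − 1) g¹₂. -/
/-- A divisor on `Γ` is a finitely supported function `Γ → ℤ`. -/
abbrev Divisor (Γ : Type) : Type := Γ →₀ ℤ

/-- The degree of a divisor is the (finite) sum of its values. -/
def deg {Γ : Type} (D : Divisor Γ) : ℤ := D.sum fun _ n => n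

/-- A divisor is effective if all of its values are nonnegative. -/
def Effective {Γ : Type} (D : Divisor Γ) : Prop := ∀ p, 0 ≤ D p

/-- The complete linear system `|D|` with respect to a fixed subgroup `P`
of principal divisors: all effective divisors linearly equivalent to `D`
(where `D ~ E` iff `D - E ∈ P`). -/
def LinSys {Γ : Type} (P : AddSubgroup (Divisor Γ)) (D : Divisor Γ) : Set (Divisor Γ) :=
  {E | Effective E ∧ D - E ∈ P}

/-- The set of candidate ranks of `|D|`: integers `r ≥ 0` such that
`|D - E| ≠ ∅` for every effective divisor `E` of degree `r`. -/
def RankSet {Γ : Type} (P : AddSubgroup (Divisor Γ)) (D : Divisor Γ) : Set ℤ :=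
  {r | 0 ≤ r ∧ ∀ E : Divisor Γ, Effective E → deg E = r → LinSys P (D - E) ≠ ∅}

open scoped Classical in
/-- The rank `rk|D|` of the complete linear system of `D`: it is `-1` if
`|D| = ∅`, and otherwise the largest `r ≥ 0` such that `|D - E| ≠ ∅` for
every effective divisor `E` of degree `r`. -/
noncomputable def rk {Γ : Type} (P : AddSubgroup (Divisor Γ)) (D : Divisor Γ) : ℤ :=
  if LinSys P D = ∅ then -1 else sSup (RankSet P D)

namespace Aux
variable {Γ : Type}

noncomputable def degHom (Γ : Type) : Divisor Γ →+ ℤ :=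
  Finsupp.liftAddHom fun _ => AddMonoidHom.id ℤ

lemma deg_eq (D : Divisor Γ) : deg D = degHom Γ D := by
  rw [degHom, Finsupp.liftAddHom_apply]; rfl

lemma deg_zero : deg (0 : Divisor Γ) = 0 := by simp [deg_eq]
lemma deg_sub (D E : Divisor Γ) : deg (D - E) = deg D - deg E := by simp [deg_eq]
lemma deg_smul (n : ℤ) (D : Divisor Γ) : deg (n • D) = n * deg D := by
  simp [deg_eq, map_zsmul]

lemma deg_single (p : Γ) (n : ℤ) : deg (Finsupp.single p n) = n := by
  simp [deg, Finsupp.sum_single_index]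

lemma deg_nonneg {D : Divisor Γ} (h : Effective D) : 0 ≤ deg D :=
  Finset.sum_nonneg fun p _ => h p

lemma eq_zero_of_effective_deg_zero {D : Divisor Γ} (h : Effective D) (h0 : deg D = 0) :
    D = 0 := by
  have := (Finset.sum_eq_zero_iff_of_nonneg (fun p _ => h p)).mp h0
  ext p
  by_cases hp : p ∈ D.support
  · exact this p hp
  · simpa using Finsupp.notMem_support_iff.mp hp

lemma single_effective (p : Γ) {n : ℤ} (hn : 0 ≤ n) : Effective (Finsupp.single p n) := by
  classical
  intro q
  rw [Finsupp.single_apply]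
  split <;> simp [hn]

variable (P : AddSubgroup (Divisor Γ))

lemma mem_linsys_shift {D A F : Divisor Γ} (hF : F ∈ LinSys P (D - A)) (hA : Effective A) :
    A + F ∈ LinSys P D := by
  refine ⟨fun q => add_nonneg (hA q) (hF.1 q), ?_⟩
  have h : D - (A + F) = (D - A) - F := by abel
  rw [h]; exact hF.2

lemma linsys_nonempty_of_mem_rankSet [Nonempty Γ] {D : Divisor Γ} {r : ℤ}
    (h : r ∈ RankSet P D) : LinSys P D ≠ ∅ := by
  obtain ⟨p⟩ := ‹Nonempty Γ›
  obtain ⟨F, hF⟩ := Set.nonempty_iff_ne_empty.mpr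
    (h.2 (Finsupp.single p r) (single_effective p h.1) (deg_single p r))
  exact Set.Nonempty.ne_empty ⟨_, mem_linsys_shift P hF (single_effective p h.1)⟩

lemma mem_rankSet_of_le [Nonempty Γ] {D : Divisor Γ} {r s : ℤ} (h : r ∈ RankSet P D)
    (hs : 0 ≤ s) (hsr : s ≤ r) : s ∈ RankSet P D := by
  obtain ⟨p⟩ := ‹Nonempty Γ›
  refine ⟨hs, fun E hE hdE => ?_⟩
  set T := Finsupp.single p (r - s) with hT
  have hTe : Effective T := single_effective p (by omega)
  have hE' : Effective (E + T) := fun q => add_nonneg (hE q) (hTe q)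
  have hdE' : deg (E + T) = r := by
    have h2 : deg (E + T) = deg E + deg T := by simp [deg_eq]
    rw [h2, hT, deg_single, hdE]
    omega
  obtain ⟨F, hF⟩ := Set.nonempty_iff_ne_empty.mpr (h.2 (E + T) hE' hdE')
  have hFm : F ∈ LinSys P ((D - E) - T) := by
    have heq : D - (E + T) = (D - E) - T := by abel
    rwa [heq] at hF
  exact Set.Nonempty.ne_empty ⟨_, mem_linsys_shift P hFm hTe⟩

lemma rankSet_bddAbove (hP : ∀ f ∈ P, deg f = 0) [Nonempty Γ] (D : Divisor Γ) :
    BddAbove (RankSet P D) := by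
  obtain ⟨p⟩ := ‹Nonempty Γ›
  refine ⟨deg D, fun r hr => ?_⟩
  obtain ⟨F, hF⟩ := Set.nonempty_iff_ne_empty.mpr
    (hr.2 (Finsupp.single p r) (single_effective p hr.1) (deg_single p r))
  have h0 := hP _ hF.2
  rw [deg_sub, deg_sub, deg_single] at h0
  have := deg_nonneg hF.1
  omega

lemma zero_mem_rankSet {D : Divisor Γ} (h : LinSys P D ≠ ∅) : 0 ∈ RankSet P D := by
  refine ⟨le_refl _, fun E hE hdE => ?_⟩
  have : E = 0 := eq_zero_of_effective_deg_zero hE hdE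
  rwa [this, sub_zero]

lemma rk_mem_rankSet (hP : ∀ f ∈ P, deg f = 0) [Nonempty Γ] {D : Divisor Γ}
    (h : LinSys P D ≠ ∅) : rk P D ∈ RankSet P D := by
  rw [rk, if_neg h]
  exact Int.csSup_mem ⟨0, zero_mem_rankSet P h⟩ (rankSet_bddAbove P hP D)

lemma le_rk_of_mem (hP : ∀ f ∈ P, deg f = 0) [Nonempty Γ] {D : Divisor Γ} {r : ℤ}
    (hr : r ∈ RankSet P D) : r ≤ rk P D := by
  rw [rk, if_neg (linsys_nonempty_of_mem_rankSet P hr)]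
  exact le_csSup (rankSet_bddAbove P hP D) hr

lemma step [Nonempty Γ] {H D : Divisor Γ} (h1 : (1 : ℤ) ∈ RankSet P H) {r : ℤ}
    (hr : r ∈ RankSet P D) : r + 1 ∈ RankSet P (D + H) := by
  classical
  refine ⟨by linarith [hr.1], fun E hE hdE => ?_⟩
  have hEne : E ≠ 0 := by
    intro h0
    rw [h0, deg_zero] at hdE
    have := hr.1
    omega
  obtain ⟨p, hp⟩ := Finsupp.support_nonempty_iff.mpr hEne
  have hEp : 1 ≤ E p := by
    have h1' := Finsupp.mem_support_iff.mp hp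
    have := hE p
    omega
  set E' := E - Finsupp.single p 1 with hE'def
  have hE'eff : Effective E' := by
    intro q
    rw [hE'def, Finsupp.sub_apply, Finsupp.single_apply]
    by_cases hq : p = q
    · subst hq; simpa using hEp
    · simp [hq]; exact hE q
  have hdE' : deg E' = r := by
    rw [hE'def, deg_sub, deg_single]; omega
  obtain ⟨G, hG⟩ := Set.nonempty_iff_ne_empty.mpr (hr.2 E' hE'eff hdE')
  obtain ⟨F, hF⟩ := Set.nonempty_iff_ne_empty.mpr
    (h1.2 (Finsupp.single p 1) (single_effective p one_pos.le) (deg_single p 1))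
  refine Set.Nonempty.ne_empty ⟨F + G, fun q => add_nonneg (hF.1 q) (hG.1 q), ?_⟩
  have key : (D + H - E) - (F + G) =
      ((D - E') - G) + ((H - Finsupp.single p 1) - F) := by
    rw [hE'def]; abel
  rw [key]
  exact P.add_mem hG.2 hF.2

lemma multi [Nonempty Γ] {H : Divisor Γ} (h1 : (1 : ℤ) ∈ RankSet P H) :
    ∀ n : ℕ, ((n : ℤ) + 1) ∈ RankSet P (((n : ℤ) + 1) • H) := by
  intro n
  induction n with
  | zero => simpa using h1
  | succ n ih =>
    have hstep := step P h1 ih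
    have heq : (((n : ℕ) + 1 : ℕ) : ℤ) + 1 = ((n : ℤ) + 1) + 1 := by push_cast; ring
    rw [heq, add_smul, one_smul]
    exact hstep

end Aux

/-- Corollary 2.4: under Riemann–Roch with `g ≥ 2`, if `H` is a
`g¹₂` (i.e. `deg H = 2` and `rk|H| = 1`, so `Γ` is hyperelliptic), then
`(g - 1) • H` is linearly equivalent to `K`, i.e. `|K| = (g - 1) g¹₂`. -/
theorem canonical_is_multiple_of_g12 {Γ : Type} [Nonempty Γ]
    (P : AddSubgroup (Divisor Γ)) (hP : ∀ f ∈ P, deg f = 0)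
    (K : Divisor Γ) (g : ℤ)
    (hRR : ∀ D : Divisor Γ, rk P D - rk P (K - D) = deg D - g + 1)
    (hg : 2 ≤ g)
    (H : Divisor Γ) (hdegH : deg H = 2) (hrkH : rk P H = 1) :
    (g - 1) • H - K ∈ P ∧ LinSys P K = LinSys P ((g - 1) • H) := by
  -- deg K = 2g - 2
  have hRR0 := hRR 0
  have hRRK := hRR K
  rw [sub_zero, Aux.deg_zero] at hRR0
  rw [sub_self] at hRRK
  have hdegK : deg K = 2 * g - 2 := by omega
  -- |H| ≠ ∅ and 1 ∈ RankSet P H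
  have hHne : LinSys P H ≠ ∅ := by
    intro h
    simp only [rk, if_pos h] at hrkH
    omega
  have h1mem : (1 : ℤ) ∈ RankSet P H := by
    have := Aux.rk_mem_rankSet P hP hHne
    rwa [hrkH] at this
  -- (g-1) ∈ RankSet P ((g-1) • H)
  set n : ℕ := (g - 2).toNat with hn
  have hncast : (n : ℤ) = g - 2 := Int.toNat_of_nonneg (by omega)
  have hmem : (g - 1) ∈ RankSet P ((g - 1) • H) := by
    have := Aux.multi P h1mem n
    rw [hncast] at this
    have heq : g - 2 + 1 = g - 1 := by ring
    rwa [heq] at this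
  have hrk1 : g - 1 ≤ rk P ((g - 1) • H) := Aux.le_rk_of_mem P hP hmem
  -- Riemann-Roch at (g-1)•H
  have hdegD : deg ((g - 1) • H) = 2 * g - 2 := by
    rw [Aux.deg_smul, hdegH]; ring
  have hRRD := hRR ((g - 1) • H)
  rw [hdegD] at hRRD
  have hrkKD : 0 ≤ rk P (K - (g - 1) • H) := by omega
  have hKDne : LinSys P (K - (g - 1) • H) ≠ ∅ := by
    intro h
    simp only [rk, if_pos h] at hrkKD
    omega
  obtain ⟨F, hFeff, hFmem⟩ := Set.nonempty_iff_ne_empty.mpr hKDne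
  have hdegF : deg F = 0 := by
    have := hP _ hFmem
    rw [Aux.deg_sub, Aux.deg_sub, hdegK, hdegD] at this
    omega
  have hF0 : F = 0 := Aux.eq_zero_of_effective_deg_zero hFeff hdegF
  rw [hF0, sub_zero] at hFmem
  -- hFmem : K - (g-1)•H ∈ P
  have hmain : (g - 1) • H - K ∈ P := by
    have := P.neg_mem hFmem
    rwa [neg_sub] at this
  refine ⟨hmain, ?_⟩
  ext E
  simp only [LinSys, Set.mem_setOf_eq]
  constructor
  · rintro ⟨h1, h2⟩
    refine ⟨h1, ?_⟩
    have heq : (g - 1) • H - E = ((g - 1) • H - K) + (K - E) := by abel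
    rw [heq]
    exact P.add_mem hmain h2
  · rintro ⟨h1, h2⟩
    refine ⟨h1, ?_⟩
    have heq : K - E = (K - (g - 1) • H) + ((g - 1) • H - E) := by abel
    rw [heq]
    exact P.add_mem hFmem h2
end

section
/- (Theorem 3.1, tropical Clifford inequality) Assume the Riemann–Roch hypothesis. Let D be a special divisor, i.e. D is effective and rk|K − D| ≥ 0. Then rk|D| ≤ (deg D)/2, i.e. 2·rk|D| ≤ deg D. -/
lemma deg_eq {Γ : Type} (D : Divisor Γ) :
    deg D = Finsupp.liftAddHom (fun _ : Γ => AddMonoidHom.id ℤ) D := by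
  simp [Finsupp.liftAddHom_apply, deg]; rfl

lemma deg_sub {Γ : Type} (A B : Divisor Γ) : deg (A - B) = deg A - deg B := by
  simp [deg_eq, map_sub]

lemma deg_add {Γ : Type} (A B : Divisor Γ) : deg (A + B) = deg A + deg B := by
  simp [deg_eq, map_add]

lemma deg_zero {Γ : Type} : deg (0 : Divisor Γ) = 0 := by simp [deg_eq]

lemma deg_single {Γ : Type} (p : Γ) (r : ℤ) : deg (Finsupp.single p r) = r := by
  simp [deg_eq]

lemma eff_deg_nonneg {Γ : Type} {E : Divisor Γ} (h : Effective E) : 0 ≤ deg E :=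
  Finset.sum_nonneg fun p _ => h p

lemma eff_deg_zero {Γ : Type} {E : Divisor Γ} (h : Effective E) (h0 : deg E = 0) :
    E = 0 := by
  ext p
  by_cases hp : p ∈ E.support
  · exact (Finset.sum_eq_zero_iff_of_nonneg fun q _ => h q).mp h0 p hp
  · simpa using Finsupp.notMem_support_iff.mp hp

/-- degree is preserved by linear equivalence -/
lemma deg_of_equiv {Γ : Type} {P : AddSubgroup (Divisor Γ)}
    (hP : ∀ f ∈ P, deg f = 0) {A B : Divisor Γ} (h : A - B ∈ P) : deg B = deg A := by
  have := hP _ h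
  rw [deg_sub] at this; omega

lemma linsys_empty_of_neg {Γ : Type} {P : AddSubgroup (Divisor Γ)}
    (hP : ∀ f ∈ P, deg f = 0) {D : Divisor Γ} (h : deg D < 0) : LinSys P D = ∅ := by
  ext E
  simp only [LinSys, Set.mem_setOf_eq, Set.mem_empty_iff_false, iff_false, not_and]
  intro hE hmem
  have := deg_of_equiv hP hmem
  have := eff_deg_nonneg hE
  omega

lemma rankset_bdd {Γ : Type} [Nonempty Γ] {P : AddSubgroup (Divisor Γ)}
    (hP : ∀ f ∈ P, deg f = 0) (D : Divisor Γ) :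
    RankSet P D ⊆ Set.Iic (deg D) := by
  intro r hr
  by_contra hlt
  simp only [Set.mem_Iic, not_le] at hlt
  obtain ⟨p⟩ := ‹Nonempty Γ›
  have hE : Effective (Finsupp.single p r) := by
    intro q
    rcases eq_or_ne q p with rfl | hq
    · simpa using hr.1
    · simp [Finsupp.single_apply_eq_zero.mpr, Finsupp.single_eq_of_ne' (Ne.symm hq)]
  refine hr.2 _ hE (deg_single p r) ?_
  apply linsys_empty_of_neg hP
  rw [deg_sub, deg_single]; omega

lemma zero_mem_rankset {Γ : Type} {P : AddSubgroup (Divisor Γ)} {D : Divisor Γ}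
    (h : LinSys P D ≠ ∅) : 0 ∈ RankSet P D := by
  refine ⟨le_refl _, fun E hE hdeg => ?_⟩
  rw [eff_deg_zero hE hdeg, sub_zero]
  exact h

lemma rk_eq_sSup {Γ : Type} {P : AddSubgroup (Divisor Γ)} {D : Divisor Γ}
    (h : LinSys P D ≠ ∅) : rk P D = sSup (RankSet P D) := by
  rw [rk, if_neg h]

lemma rk_mem_rankset {Γ : Type} [Nonempty Γ] {P : AddSubgroup (Divisor Γ)}
    (hP : ∀ f ∈ P, deg f = 0) {D : Divisor Γ}
    (h : LinSys P D ≠ ∅) : rk P D ∈ RankSet P D := by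
  rw [rk_eq_sSup h]
  exact Int.csSup_mem ⟨0, zero_mem_rankset h⟩ ⟨deg D, fun r hr => rankset_bdd hP D hr⟩

lemma rk_nonneg_of_nonempty {Γ : Type} [Nonempty Γ] {P : AddSubgroup (Divisor Γ)}
    (hP : ∀ f ∈ P, deg f = 0) {D : Divisor Γ}
    (h : LinSys P D ≠ ∅) : 0 ≤ rk P D :=
  (rk_mem_rankset hP h).1

lemma linsys_nonempty_of_rk_nonneg {Γ : Type} {P : AddSubgroup (Divisor Γ)} {D : Divisor Γ}
    (h : 0 ≤ rk P D) : LinSys P D ≠ ∅ := by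
  intro hemp
  rw [rk, if_pos hemp] at h
  omega

lemma le_rk {Γ : Type} [Nonempty Γ] {P : AddSubgroup (Divisor Γ)}
    (hP : ∀ f ∈ P, deg f = 0) {D : Divisor Γ} {r : ℤ}
    (hne : LinSys P D ≠ ∅) (h : r ∈ RankSet P D) : r ≤ rk P D := by
  rw [rk_eq_sSup hne]
  exact le_csSup ⟨deg D, fun s hs => rankset_bdd hP D hs⟩ h

/-- splitting: extract an effective subdivisor of any smaller degree -/
lemma split_effective {Γ : Type} (s : ℕ) :
    ∀ E : Divisor Γ, Effective E → (s : ℤ) ≤ deg E →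
      ∃ E1 : Divisor Γ, Effective E1 ∧ Effective (E - E1) ∧ deg E1 = s := by
  induction s with
  | zero =>
    intro E hE _
    exact ⟨0, fun q => le_refl _, by simpa using hE, deg_zero⟩
  | succ n ih =>
    intro E hE hle
    obtain ⟨E1, hE1, hdiff, hdeg⟩ := ih E hE (by push_cast at hle ⊢; omega)
    have hpos : 0 < deg (E - E1) := by
      rw [deg_sub, hdeg]; push_cast at hle ⊢; omega
    have : ∃ p, 0 < (E - E1) p := by
      by_contra hall
      push_neg at hall
      have : E - E1 = 0 := by
        ext q; exact le_antisymm (hall q) (hdiff q)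
      rw [this, deg_zero] at hpos; omega
    obtain ⟨p, hp⟩ := this
    refine ⟨E1 + Finsupp.single p 1, ?_, ?_, ?_⟩
    · intro q
      rcases eq_or_ne q p with rfl | hq
      · simp only [Finsupp.add_apply, Finsupp.single_eq_same]
        have := hE1 q; omega
      · simp only [Finsupp.add_apply, Finsupp.single_eq_of_ne' (Ne.symm hq), add_zero]
        exact hE1 q
    · intro q
      have : E - (E1 + Finsupp.single p 1) = (E - E1) - Finsupp.single p 1 := by abel
      rw [this]
      rcases eq_or_ne q p with rfl | hq
      · simp only [Finsupp.sub_apply, Finsupp.single_eq_same] at hp ⊢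
        omega
      · simp only [Finsupp.sub_apply, Finsupp.single_eq_of_ne' (Ne.symm hq), sub_zero]
        exact hdiff q
    · rw [deg_add, hdeg, deg_single]; push_cast; ring


/-- Theorem 3.1, tropical Clifford inequality: under
Riemann–Roch, a special divisor `D` (effective, with `rk|K - D| ≥ 0`)
satisfies `2 rk|D| ≤ deg D`. -/
theorem tropical_clifford_inequality {Γ : Type} [Nonempty Γ]
    (P : AddSubgroup (Divisor Γ)) (hP : ∀ f ∈ P, deg f = 0)
    (K : Divisor Γ) (g : ℤ)
    (hRR : ∀ D : Divisor Γ, rk P D - rk P (K - D) = deg D - g + 1)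
    (D : Divisor Γ) (hD : Effective D) (hspecial : 0 ≤ rk P (K - D)) :
    2 * rk P D ≤ deg D := by
  -- |D| nonempty since D effective
  have hDne : LinSys P D ≠ ∅ := by
    intro hemp
    have : D ∈ LinSys P D := ⟨hD, by simpa using P.zero_mem⟩
    rw [hemp] at this; exact this
  have hKDne : LinSys P (K - D) ≠ ∅ := linsys_nonempty_of_rk_nonneg hspecial
  -- |K| nonempty
  have hKne : LinSys P K ≠ ∅ := by
    obtain ⟨B, hBeff, hBmem⟩ := Set.nonempty_iff_ne_empty.mpr hKDne
    intro hemp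
    have : D + B ∈ LinSys P K := by
      refine ⟨fun q => add_nonneg (hD q) (hBeff q), ?_⟩
      have : K - (D + B) = (K - D) - B := by abel
      rw [this]; exact hBmem
    rw [hemp] at this; exact this
  -- rk 0 = 0, hence rk K = g - 1
  have h0ne : LinSys P (0 : Divisor Γ) ≠ ∅ := by
    intro hemp
    have : (0 : Divisor Γ) ∈ LinSys P 0 := ⟨fun q => le_refl _, by simpa using P.zero_mem⟩
    rw [hemp] at this; exact this
  have hrk0 : rk P (0 : Divisor Γ) = 0 := by
    have h1 := rk_nonneg_of_nonempty hP h0ne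
    have h2 : rk P (0 : Divisor Γ) ≤ deg (0 : Divisor Γ) :=
      rankset_bdd hP 0 (rk_mem_rankset hP h0ne)
    rw [deg_zero] at h2; omega
  have hrkK : rk P K = g - 1 := by
    have := hRR 0
    rw [hrk0, deg_zero, sub_zero] at this
    omega
  -- key: rk D + rk (K - D) ∈ RankSet P K
  set r1 := rk P D with hr1
  set r2 := rk P (K - D) with hr2
  have hr1mem := rk_mem_rankset hP hDne
  have hr2mem := rk_mem_rankset hP hKDne
  have hr1nn : 0 ≤ r1 := hr1mem.1
  have hsum : r1 + r2 ∈ RankSet P K := by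
    refine ⟨by omega, fun E hE hdeg => ?_⟩
    obtain ⟨E1, hE1eff, hE2eff, hE1deg⟩ :=
      split_effective r1.toNat E hE (by rw [hdeg]; omega)
    rw [Int.toNat_of_nonneg hr1nn] at hE1deg
    have hE2deg : deg (E - E1) = r2 := by rw [deg_sub, hE1deg, hdeg]; ring
    obtain ⟨A, hAeff, hAmem⟩ := Set.nonempty_iff_ne_empty.mpr
      (hr1mem.2 E1 hE1eff hE1deg)
    obtain ⟨B, hBeff, hBmem⟩ := Set.nonempty_iff_ne_empty.mpr
      (hr2mem.2 (E - E1) hE2eff hE2deg)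
    intro hemp
    have : A + B ∈ LinSys P (K - E) := by
      refine ⟨fun q => add_nonneg (hAeff q) (hBeff q), ?_⟩
      have heq : K - E - (A + B) = (D - E1 - A) + ((K - D) - (E - E1) - B) := by abel
      rw [heq]
      exact P.add_mem hAmem hBmem
    rw [hemp] at this; exact this
  have hle : r1 + r2 ≤ rk P K := le_rk hP hKne hsum
  have := hRR D
  rw [← hr1, ← hr2] at this
  omega
end
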